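/- arXiv:1010.1923 — 2 statements merged into one kernel-verified Lean document; each statement's English description precedes it below -/
import Mathlib

section
/- Any point at which l1 = l1' = l2 l2' - l3 l3' = 0 lies on the Cayley–Rohn quartic F = 0 and is a singular point of it (all four partial derivatives of F vanish there). -/
/-! With `aᵢ = lᵢ mᵢ`, the quartic is the quadratic form `(a₂ - a₃)² + a₁ (a₁ - 2a₂ - 2a₃)`.
On `l₁ = m₁ = 0 = a₂ - a₃` both summands are products of two factors vanishing at the point,
so by the Leibniz rule the quartic and all its first derivatives vanish there. -/

open MvPolynomial

def cayleyF {R : Type*} [CommRing R] (l1 l2 l3 m1 m2 m3 : R) : R :=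
  l1 ^ 2 * m1 ^ 2 + l2 ^ 2 * m2 ^ 2 + l3 ^ 2 * m3 ^ 2
    - 2 * l1 * l2 * m1 * m2 - 2 * l1 * l3 * m1 * m3 - 2 * l2 * l3 * m2 * m3

theorem cayleyF_eq_sq_add_mul {R : Type*} [CommRing R] (l1 l2 l3 m1 m2 m3 : R) :
    cayleyF l1 l2 l3 m1 m2 m3 =
      (l2 * m2 - l3 * m3) * (l2 * m2 - l3 * m3) +
        l1 * (m1 * (l1 * m1 - 2 * l2 * m2 - 2 * l3 * m3)) := by
  unfold cayleyF
  ring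

theorem map_derivation_mul_eq_zero {R A B : Type*} [CommSemiring R] [CommSemiring A]
    [Algebra R A] [Semiring B] (φ : A →+* B) (D : Derivation R A A) {a b : A}
    (ha : φ a = 0) (hb : φ b = 0) : φ (D (a * b)) = 0 := by
  rw [Derivation.leibniz, smul_eq_mul, smul_eq_mul, map_add, map_mul, map_mul, ha, hb,
    zero_mul, zero_mul, add_zero]

theorem cayley_rohn_singular_second_type_general
    (l1 l2 l3 m1 m2 m3 : MvPolynomial (Fin 4) ℂ)
    (P : Fin 4 → ℂ)
    (h1 : eval P l1 = 0) (h2 : eval P m1 = 0)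
    (h3 : eval P (l2 * m2 - l3 * m3) = 0) :
    eval P (cayleyF l1 l2 l3 m1 m2 m3) = 0 ∧
      ∀ i : Fin 4, eval P (pderiv i (cayleyF l1 l2 l3 m1 m2 m3)) = 0 := by
  have hm1_mul : eval P (m1 * (l1 * m1 - 2 * l2 * m2 - 2 * l3 * m3)) = 0 := by
    rw [map_mul, h2, zero_mul]
  rw [cayleyF_eq_sq_add_mul]
  refine ⟨by rw [map_add, map_mul, map_mul, h3, h1, zero_mul, zero_mul, add_zero], fun i => ?_⟩
  rw [map_add, map_add, map_derivation_mul_eq_zero _ _ h3 h3,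
    map_derivation_mul_eq_zero _ _ h1 hm1_mul, add_zero]

/-- A point where `l1 = l1' = l2 l2' - l3 l3' = 0` is a singular point of the
Cayley–Rohn quartic. -/
theorem cayley_rohn_singular_second_type
    (l1 l2 l3 m1 m2 m3 : MvPolynomial (Fin 4) ℂ)
    (hl1 : l1.IsHomogeneous 1) (hl2 : l2.IsHomogeneous 1) (hl3 : l3.IsHomogeneous 1)
    (hm1 : m1.IsHomogeneous 1) (hm2 : m2.IsHomogeneous 1) (hm3 : m3.IsHomogeneous 1)
    (P : Fin 4 → ℂ) (hP : P ≠ 0)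
    (h1 : eval P l1 = 0) (h2 : eval P m1 = 0)
    (h3 : eval P (l2 * m2 - l3 * m3) = 0) :
    eval P (cayleyF l1 l2 l3 m1 m2 m3) = 0 ∧
      ∀ i : Fin 4, eval P (pderiv i (cayleyF l1 l2 l3 m1 m2 m3)) = 0 :=
  cayley_rohn_singular_second_type_general l1 l2 l3 m1 m2 m3 P h1 h2 h3
end

section
/- Let L be a line on a quartic surface V ⊂ P^3 and E a trope of V (a plane such that the quartic form restricts to the square of a conic form on E) with L not contained in E. If p ∈ L ∩ E is a smooth point of V, then the tangent plane of V at p equals E; consequently, since L ⊂ V forces L to lie in the tangent plane of V at every smooth point of V on L, we get L ⊂ E, a contradiction. Hence L meets E only in singular points of V. -/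
/-!
Restrict everything to the line `u ↦ p + u • e` through the point `p ∈ L ∩ E` and a point
`e ∈ L ∖ E`. There `ℓ` becomes `ℓ(e) · u` and `F` vanishes identically, so
`q(p + u e)² = -u · ℓ(e) · g(p + u e)`. Comparing the terms of order `u` forces `g(p) = 0`;
together with `q(p) = ℓ(p) = 0` this kills the gradient `2 q ∇q + g ∇ℓ + ℓ ∇g` of `F` at `p`.
-/

open MvPolynomial

theorem Polynomial.eval_zero_eq_zero_of_sq_add_X_mul_eq_zero {R : Type*} [CommRing R]
    [IsReduced R] {Q G : Polynomial R} (h : Q ^ 2 + Polynomial.X * G = 0) :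
    G.eval 0 = 0 := by
  have hQ : Q.eval 0 = 0 := by
    have h0 := congrArg (Polynomial.eval 0) h
    simp only [Polynomial.eval_add, Polynomial.eval_pow, Polynomial.eval_mul, Polynomial.eval_X,
      zero_mul, add_zero, Polynomial.eval_zero] at h0
    exact IsReduced.eq_zero _ ⟨2, h0⟩
  simpa [Polynomial.derivative_pow, hQ] using
    congrArg (fun P => (Polynomial.derivative P).eval 0) h

namespace MvPolynomial

variable {σ R : Type*} [CommRing R]

noncomputable def restrictLine (p e : σ → R) : MvPolynomial σ R →ₐ[R] Polynomial R :=
  aeval fun i => Polynomial.C (p i) + Polynomial.C (e i) * Polynomial.X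

theorem eval_restrictLine (p e : σ → R) (φ : MvPolynomial σ R) (u : R) :
    (restrictLine p e φ).eval u = eval (p + u • e) φ := by
  induction φ using MvPolynomial.induction_on with
  | C a => simp [restrictLine]
  | add _ _ h₁ h₂ => simp [h₁, h₂]
  | mul_X _ i h => simp [restrictLine, h] at *; ring

theorem IsHomogeneous.restrictLine_of_degree_one {ℓ : MvPolynomial σ R}
    (hℓ : ℓ.IsHomogeneous 1) (p e : σ → R) :
    restrictLine p e ℓ = Polynomial.C (eval p ℓ) + Polynomial.C (eval e ℓ) * Polynomial.X := by
  have hmem : ℓ ∈ Submodule.span R (Set.range X) := by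
    rw [← homogeneousSubmodule_one_eq_span_X]
    exact hℓ
  clear hℓ
  induction hmem using Submodule.span_induction with
  | mem _ h => obtain ⟨i, rfl⟩ := h; simp [restrictLine]
  | zero => simp
  | add _ _ _ _ h₁ h₂ => simp only [map_add, h₁, h₂]; ring
  | smul c _ _ h => simp only [map_smul, smul_eval, h, Polynomial.smul_eq_C_mul, map_mul]; ring

theorem eval_pderiv_sq_add_mul {q ℓ g : MvPolynomial σ R} {p : σ → R} (hq : eval p q = 0)
    (hℓ : eval p ℓ = 0) (i : σ) :
    eval p (pderiv i (q ^ 2 + ℓ * g)) = eval p g * eval p (pderiv i ℓ) := by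
  simp [hq, hℓ]

end MvPolynomial

theorem line_meets_trope_in_singular_points_general
    (F ℓ q g : MvPolynomial (Fin 4) ℂ)
    (hℓ : ℓ.IsHomogeneous 1)
    (htrope : F = q ^ 2 + ℓ * g)
    (A B : Fin 4 → ℂ)
    (hLV : ∀ s t : ℂ, eval (s • A + t • B) F = 0)
    (hLE : ∃ s t : ℂ, eval (s • A + t • B) ℓ ≠ 0) :
    ∀ s t : ℂ, ¬(s = 0 ∧ t = 0) → eval (s • A + t • B) ℓ = 0 →
      ∀ i : Fin 4, eval (s • A + t • B) (pderiv i F) = 0 := by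
  intro s t _ hp i
  obtain ⟨s₁, t₁, he⟩ := hLE
  set p := s • A + t • B
  set e := s₁ • A + t₁ • B
  have hFline : restrictLine p e F = 0 := Polynomial.funext fun u => by
    rw [eval_restrictLine, show p + u • e = (s + u * s₁) • A + (t + u * t₁) • B by module, hLV,
      Polynomial.eval_zero]
  have hq : eval p q = 0 := by
    have h0 : eval p F = 0 := hLV s t
    rw [htrope] at h0
    simpa [hp] using h0
  have hg : eval p g = 0 := by
    have h0 := Polynomial.eval_zero_eq_zero_of_sq_add_X_mul_eq_zero
      (Q := restrictLine p e q) (G := Polynomial.C (eval e ℓ) * restrictLine p e g) (by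
        rw [← hFline, htrope, map_add, map_pow, map_mul, hℓ.restrictLine_of_degree_one, hp]
        simp only [map_zero, zero_add]
        ring)
    simpa [eval_restrictLine, he] using h0
  rw [htrope, eval_pderiv_sq_add_mul hq hp, hg, zero_mul]

/-- A line on a quartic surface which is not contained in a trope meets that trope
only in singular points of the surface. -/
theorem line_meets_trope_in_singular_points
    (F ℓ q g : MvPolynomial (Fin 4) ℂ)
    (hF : F.IsHomogeneous 4) (hℓ : ℓ.IsHomogeneous 1) (hq : q.IsHomogeneous 2)
    (htrope : F = q ^ 2 + ℓ * g)
    (A B : Fin 4 → ℂ) (hAB : LinearIndependent ℂ ![A, B])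
    (hLV : ∀ s t : ℂ, eval (s • A + t • B) F = 0)
    (hLE : ∃ s t : ℂ, eval (s • A + t • B) ℓ ≠ 0) :
    ∀ s t : ℂ, ¬(s = 0 ∧ t = 0) → eval (s • A + t • B) ℓ = 0 →
      ∀ i : Fin 4, eval (s • A + t • B) (pderiv i F) = 0 :=
  line_meets_trope_in_singular_points_general F ℓ q g hℓ htrope A B hLV hLE
end
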